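/- Let 0 < a ≤ b < 1 and s > 0, and suppose Y_0 = ⌊aN⌋ in the biparental Moran model with viability selection. Then there exists a constant C > 0 (depending on a, b and s but not on N) such that ℙ(T_{⌊bN⌋} > C·N) → 0 as N → ∞. -/

import Mathlib

open MeasureTheory Filter

/-- The biparental Moran model with viability selection on a population of size `N`
with selection parameter `s`, realized on a probability space `Ω`.
`W n` is the matrix of genetic weights, `Y n` the set of advantaged individuals,
`mo n`, `fa n`, `ka n` the positions of the mother, father and killed individual
at time step `n`. -/
structure MoranModel (N : ℕ) (s : ℝ) (Ω : Type) [MeasurableSpace Ω] where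
  P : Measure Ω
  isProb : IsProbabilityMeasure P
  W : ℕ → Ω → Fin N → Fin N → ℝ
  Y : ℕ → Ω → Finset (Fin N)
  mo : ℕ → Ω → Fin N
  fa : ℕ → Ω → Fin N
  ka : ℕ → Ω → Fin N
  meas_W : ∀ n, Measurable (W n)
  meas_Y : ∀ n (A : Set (Finset (Fin N))), MeasurableSet (Y n ⁻¹' A)
  meas_mo : ∀ n, Measurable (mo n)
  meas_fa : ∀ n, Measurable (fa n)
  meas_ka : ∀ n, Measurable (ka n)
  W_init : ∀ ω i j, W 0 ω i j = if i = j then (1 : ℝ) else 0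
  Y_rec : ∀ n ω, Y (n + 1) ω =
    if mo n ω ∈ Y n ω then insert (ka n ω) (Y n ω) else (Y n ω).erase (ka n ω)
  W_rec : ∀ n ω i j, W (n + 1) ω i j =
    if i = ka n ω then (W n ω (mo n ω) j + W n ω (fa n ω) j) / 2 else W n ω i j
  /-- Conditionally on the natural filtration of the chain `(W, Y)`, the mother and
  father are uniform on the population, and independently the killed individual `k` is
  chosen with probability proportional to `1 + s` if disadvantaged, `1` if advantaged. -/
  law : ∀ (n : ℕ) (A : Set Ω),
    MeasurableSet[⨆ k ∈ Set.Iic n,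
      (MeasurableSpace.comap (W k) inferInstance ⊔ MeasurableSpace.comap (Y k) ⊤)] A →
    ∀ i j k : Fin N,
      (P (A ∩ {ω | mo n ω = i ∧ fa n ω = j ∧ ka n ω = k})).toReal =
        (1 / (N : ℝ) ^ 2) *
          ∫ ω in A, (1 + s * (if k ∈ Y n ω then 0 else 1)) /
            (((Y n ω).card : ℝ) + (1 + s) * ((N : ℝ) - ((Y n ω).card : ℝ))) ∂P

/-- The natural filtration of the chain `(W, Y)`. -/
def MoranModel.F {N : ℕ} {s : ℝ} {Ω : Type} [MeasurableSpace Ω]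
    (M : MoranModel N s Ω) (n : ℕ) : MeasurableSpace Ω :=
  ⨆ k ∈ Set.Iic n,
    (MeasurableSpace.comap (M.W k) inferInstance ⊔ MeasurableSpace.comap (M.Y k) ⊤)


/-- The hitting time `T_k` of level `k` by the number of advantaged individuals
`(Yₙ)ₙ`, with value `∞` if the level is never hit. -/
noncomputable def MoranModel.T {N : ℕ} {s : ℝ} {Ω : Type} [MeasurableSpace Ω]
    (M : MoranModel N s Ω) (k : ℕ) (ω : Ω) : ℕ∞ :=
  ⨅ (n : ℕ) (_ : (M.Y n ω).card = k), (n : ℕ∞)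

/-!
The count `Xₙ = |𝒴ₙ|` is itself a Markov chain: from `x` it moves up with probability
`p⁺(x)`, down with probability `p⁻(x)`, and `p⁺ = (1 + s) p⁻`. Hence `(1 + s)^(-Xₙ)` is a
martingale, and by the gambler's-ruin argument the count started at `⌊aN⌋` drops to
`⌊aN⌋ / 2` with probability at most `(1 + s)^(-⌊aN⌋/2)`. As long as the count stays in the
window `(⌊aN⌋ / 2, ⌊bN⌋)` we have `p⁺ ≥ q = a(1 - b)/2`, so for `(1 + s)⁻¹ < r < 1` the
function `r^X` contracts by the factor `ρ = 1 - q (1 - r) (1 - (r (1 + s))⁻¹) < 1` at each step,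
and the chain stays `n` steps in the window with probability at most `r^(-N) ρⁿ`. This is
exponentially small for `n = CN` once `ρ^C < r`. Both estimates are run on the chain killed
on leaving the window and rest on the one-step identity `∫_B g(Xₙ₊₁) = ∫_B (Pg)(Xₙ)` for
`B ∈ ℱₙ`.
-/

lemma Finset.sum_ite_mem_univ {α : Type*} [Fintype α] [DecidableEq α] (T : Finset α)
    (c₁ c₂ : ℝ) :
    ∑ k, (if k ∈ T then c₁ else c₂) = T.card * c₁ + (Fintype.card α - T.card) * c₂ := by
  rw [Finset.sum_ite, Finset.sum_const, Finset.sum_const, Finset.filter_mem_eq_inter,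
    Finset.univ_inter, Finset.filter_not, Finset.filter_mem_eq_inter, Finset.univ_inter,
    Finset.card_sdiff_of_subset T.subset_univ, Finset.card_univ, nsmul_eq_mul, nsmul_eq_mul,
    Nat.cast_sub T.card_le_univ]

theorem MeasureTheory.setIntegral_eq_sum_fibers {Ω α E : Type*} [MeasurableSpace Ω]
    [Fintype α] [NormedAddCommGroup E] [NormedSpace ℝ E] {μ : Measure Ω} {Z : Ω → α}
    (hZ : ∀ a, MeasurableSet (Z ⁻¹' {a})) {f : Ω → E} {B : Set Ω} (hB : MeasurableSet B)
    (hf : IntegrableOn f B μ) :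
    ∫ ω in B, f ω ∂μ = ∑ a, ∫ ω in B ∩ Z ⁻¹' {a}, f ω ∂μ := by
  conv_lhs => rw [show B = ⋃ a, B ∩ Z ⁻¹' {a} by ext; simp]
  refine integral_iUnion_fintype (fun a => hB.inter (hZ a)) (fun a b hab => ?_)
    (fun a => hf.mono_set Set.inter_subset_left)
  exact ((Set.disjoint_singleton.2 hab).preimage Z).mono Set.inter_subset_right
    Set.inter_subset_right

namespace Moran

noncomputable section

variable (N : ℕ) (s : ℝ)

def selectionDenom (x : ℕ) : ℝ := x + (1 + s) * (N - x)

/- With `x` advantaged individuals, the count goes up when the mother is advantaged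
(probability `x / N`) and a disadvantaged individual is killed (probability
`(1 + s) (N - x) / selectionDenom N s x`); it goes down in the symmetric case. -/
def upProb (x : ℕ) : ℝ := x * ((1 + s) * (N - x)) / (N * selectionDenom N s x)

def downProb (x : ℕ) : ℝ := (N - x) * x / (N * selectionDenom N s x)

/-- `nextMean N s g t = 𝔼[g(Xₙ₊₁) | Xₙ = t]`. At `t = 0` the truncated `t - 1` is harmless
since `downProb N s 0 = 0`. -/
def nextMean (g : ℕ → ℝ) (t : ℕ) : ℝ :=
  downProb N s t * g (t - 1) + (1 - upProb N s t - downProb N s t) * g t +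
    upProb N s t * g (t + 1)

def geomDrift (s r : ℝ) : ℝ := (1 - r) * (1 - (r * (1 + s))⁻¹)

/-- The factor `ρ` by which `r ^ X` contracts per step while `upProb ≥ a (1 - b) / 2`. -/
def contractionRate (a b s r : ℝ) : ℝ := 1 - a * (1 - b) / 2 * geomDrift s r

variable {N s}

lemma selectionDenom_pos (hN : 0 < N) (hs : 0 ≤ s) {x : ℕ} (hx : x ≤ N) :
    0 < selectionDenom N s x := by
  have hxN : (x : ℝ) ≤ N := by exact_mod_cast hx
  have : (0 : ℝ) < N := by exact_mod_cast hN
  unfold selectionDenom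
  nlinarith

lemma selectionDenom_le (hs : 0 ≤ s) {x : ℕ} (hx : x ≤ N) :
    selectionDenom N s x ≤ (1 + s) * N := by
  have hxN : (x : ℝ) ≤ N := by exact_mod_cast hx
  have : (0 : ℝ) ≤ x := x.cast_nonneg
  unfold selectionDenom
  nlinarith

lemma upProb_eq (x : ℕ) : upProb N s x = (1 + s) * downProb N s x := by
  unfold upProb downProb
  ring

lemma nextMean_pow {r : ℝ} (hs : 1 + s ≠ 0) (hr : r ≠ 0) (t : ℕ) :
    nextMean N s (r ^ ·) t = (1 - upProb N s t * geomDrift s r) * r ^ t := by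
  rcases t with _ | t
  · simp [nextMean, upProb, downProb]
  · simp only [nextMean, geomDrift, upProb_eq, Nat.add_sub_cancel]
    field_simp
    ring

lemma nextMean_inv_pow (hs : 1 + s ≠ 0) (t : ℕ) :
    nextMean N s ((1 + s)⁻¹ ^ ·) t = (1 + s)⁻¹ ^ t := by
  rw [nextMean_pow hs (inv_ne_zero hs), geomDrift, inv_mul_cancel₀ hs, inv_one, sub_self,
    mul_zero, mul_zero, sub_zero, one_mul]

lemma div_mul_one_sub_div_le_upProb (hN : 0 < N) (hs : 0 ≤ s) {x : ℕ} (hx : x ≤ N) :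
    x / N * (1 - x / N) ≤ upProb N s x := by
  have hN' : (0 : ℝ) < N := by exact_mod_cast hN
  have hxN : (0 : ℝ) ≤ N - x := sub_nonneg.2 (by exact_mod_cast hx)
  calc x / N * (1 - x / N) = x * ((1 + s) * (N - x)) / (N * ((1 + s) * N)) := by
        field_simp
    _ ≤ upProb N s x :=
        div_le_div_of_nonneg_left (by positivity)
          (mul_pos hN' (selectionDenom_pos hN hs hx))
          (mul_le_mul_of_nonneg_left (selectionDenom_le hs hx) hN'.le)

lemma le_upProb_of_mem_Ioo (hN : 0 < N) (hs : 0 ≤ s) {a b : ℝ} (hb : b ≤ 1) {t : ℕ}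
    (ht : t ∈ Set.Ioo (⌊a * N⌋₊ / 2) ⌊b * N⌋₊) : a * (1 - b) / 2 ≤ upProb N s t := by
  have hN' : (0 : ℝ) < N := by exact_mod_cast hN
  have hat : a * N ≤ 2 * t := by
    have h₁ := Nat.lt_floor_add_one (a * N)
    have h₂ : ⌊a * N⌋₊ + 1 ≤ 2 * t := by have := ht.1; omega
    have h₃ : ((⌊a * N⌋₊ + 1 : ℕ) : ℝ) ≤ ((2 * t : ℕ) : ℝ) := by exact_mod_cast h₂
    push_cast at h₃
    linarith
  have hbt : (t : ℝ) + 1 ≤ b * N := by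
    exact_mod_cast (Nat.le_floor_iff' (Nat.succ_ne_zero t)).1 ht.2
  have htN : t ≤ N := by
    have : (t : ℝ) ≤ N := by nlinarith
    exact_mod_cast this
  calc a * (1 - b) / 2 = a / 2 * (1 - b) := by ring
    _ ≤ t / N * (1 - t / N) := by
        apply mul_le_mul _ _ (by linarith) (by positivity)
        · rw [div_le_div_iff₀ (by norm_num) hN']; linarith
        · rw [sub_le_sub_iff_left, div_le_iff₀ hN']; linarith
    _ ≤ upProb N s t := div_mul_one_sub_div_le_upProb hN hs htN

lemma geomDrift_mem_Icc (hs : 0 ≤ s) {r : ℝ} (hr : (1 + s)⁻¹ ≤ r) (hr₁ : r ≤ 1) :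
    geomDrift s r ∈ Set.Icc 0 1 := by
  have hr₀ : 0 < r := (by positivity : (0 : ℝ) < (1 + s)⁻¹).trans_le hr
  have h₁ : 1 ≤ r * (1 + s) := by
    simpa [(by linarith : (0 : ℝ) < 1 + s).ne'] using
      mul_le_mul_of_nonneg_right hr (by linarith : (0 : ℝ) ≤ 1 + s)
  have h₂ : (r * (1 + s))⁻¹ ≤ 1 := inv_le_one_of_one_le₀ h₁
  have h₃ : 0 ≤ (r * (1 + s))⁻¹ := by positivity
  exact ⟨mul_nonneg (by linarith) (by linarith),
    mul_le_one₀ (by linarith) (by linarith) (by linarith)⟩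

lemma geomDrift_pos (hs : 0 ≤ s) {r : ℝ} (hr : (1 + s)⁻¹ < r) (hr₁ : r < 1) :
    0 < geomDrift s r := by
  have h₁ : 1 < r * (1 + s) := by
    simpa [(by linarith : (0 : ℝ) < 1 + s).ne'] using
      mul_lt_mul_of_pos_right hr (by linarith : (0 : ℝ) < 1 + s)
  exact mul_pos (by linarith) (by linarith [inv_lt_one_of_one_lt₀ h₁])

lemma contractionRate_nonneg (hs : 0 ≤ s) {a b : ℝ} (hab : a ≤ b) (hb : b < 1) {r : ℝ}
    (hr : (1 + s)⁻¹ ≤ r) (hr₁ : r ≤ 1) : 0 ≤ contractionRate a b s r := by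
  obtain ⟨hη₀, hη₁⟩ := geomDrift_mem_Icc hs hr hr₁
  have : a * (1 - b) ≤ b * (1 - b) := by gcongr
  unfold contractionRate
  nlinarith [sq_nonneg (b - 1 / 2)]

lemma contractionRate_lt_one (hs : 0 ≤ s) {a b : ℝ} (ha : 0 < a) (hb : b < 1) {r : ℝ}
    (hr : (1 + s)⁻¹ < r) (hr₁ : r < 1) : contractionRate a b s r < 1 := by
  have := geomDrift_pos hs hr hr₁
  have : 0 < a * (1 - b) / 2 := by nlinarith
  unfold contractionRate
  nlinarith

/-- The set `𝒴ₙ₊₁` when `μₙ = i` and `κₙ = k`, see `MoranModel.Y_rec`. -/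
def replace (T : Finset (Fin N)) (i k : Fin N) : Finset (Fin N) :=
  if i ∈ T then insert k T else T.erase k

variable (s) in
def killWeight (T : Finset (Fin N)) (k : Fin N) : ℝ :=
  (1 + s * if k ∈ T then 0 else 1) / selectionDenom N s T.card

lemma sum_replace_killWeight (hN : 0 < N) (hs : 0 ≤ s) (T : Finset (Fin N)) (g : ℕ → ℝ) :
    ∑ p : Fin N × Fin N × Fin N, g (replace T p.1 p.2.2).card * killWeight s T p.2.2 / N ^ 2 =
      nextMean N s g T.card := by
  have hD : selectionDenom N s T.card ≠ 0 :=
    (selectionDenom_pos hN hs (by simpa using T.card_le_univ)).ne'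
  have inner : ∀ i, ∑ k, g (replace T i k).card * killWeight s T k =
      (if i ∈ T then T.card * g T.card + (N - T.card) * (1 + s) * g (T.card + 1)
        else T.card * g (T.card - 1) + (N - T.card) * (1 + s) * g T.card) /
          selectionDenom N s T.card := by
    intro i
    have hterm : ∀ k, g (replace T i k).card * killWeight s T k =
        if k ∈ T then (if i ∈ T then g T.card else g (T.card - 1)) / selectionDenom N s T.card
        else (1 + s) * (if i ∈ T then g (T.card + 1) else g T.card) /
          selectionDenom N s T.card := by
      intro k
      by_cases hi : i ∈ T <;> by_cases hk : k ∈ T <;>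
        simp [replace, killWeight, hi, hk, Finset.card_insert_of_notMem,
          Finset.card_erase_of_mem] <;> ring
    simp only [hterm, Finset.sum_ite_mem_univ, Fintype.card_fin]
    split_ifs <;> ring
  simp only [Fintype.sum_prod_type, ← Finset.sum_div, Finset.sum_const, Finset.card_univ,
    Fintype.card_fin, nsmul_eq_mul, inner, Finset.sum_ite_mem_univ, ← Finset.mul_sum]
  simp only [nextMean, upProb, downProb]
  field_simp
  unfold selectionDenom
  ring

end

end Moran

open Moran

namespace MoranModel

variable {N : ℕ} {s : ℝ} {Ω : Type} [MeasurableSpace Ω] (M : MoranModel N s Ω)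

instance : IsProbabilityMeasure M.P := M.isProb

lemma F_le (n : ℕ) : M.F n ≤ ‹MeasurableSpace Ω› :=
  iSup₂_le fun k _ => sup_le (M.meas_W k).comap_le (by rintro _ ⟨A, -, rfl⟩; exact M.meas_Y k A)

lemma measurableSet_F_preimage_Y {k n : ℕ} (hk : k ≤ n) (A : Set (Finset (Fin N))) :
    MeasurableSet[M.F n] (M.Y k ⁻¹' A) :=
  (le_sup_right.trans (le_iSup₂ (f := fun k (_ : k ∈ Set.Iic n) =>
    MeasurableSpace.comap (M.W k) inferInstance ⊔ MeasurableSpace.comap (M.Y k) ⊤) k hk)) _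
    ⟨A, trivial, rfl⟩

lemma measurable_comp_Y {β : Type*} [MeasurableSpace β] (n : ℕ) (h : Finset (Fin N) → β) :
    Measurable fun ω => h (M.Y n ω) :=
  fun S _ => M.meas_Y n (h ⁻¹' S)

lemma integrable_comp_Y (n : ℕ) (h : Finset (Fin N) → ℝ) :
    Integrable (fun ω => h (M.Y n ω)) M.P :=
  .of_bound (M.measurable_comp_Y n h).aestronglyMeasurable (∑ T, ‖h T‖) <| ae_of_all _
    fun _ => Finset.single_le_sum (f := fun T => ‖h T‖) (fun _ _ => norm_nonneg _)
      (Finset.mem_univ _)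

lemma measureReal_inter_parents_eq {n : ℕ} {A : Set Ω} (hA : MeasurableSet[M.F n] A)
    {T : Finset (Fin N)} (hAT : ∀ ω ∈ A, M.Y n ω = T) (i j k : Fin N) :
    M.P.real (A ∩ {ω | M.mo n ω = i ∧ M.fa n ω = j ∧ M.ka n ω = k}) =
      killWeight s T k / N ^ 2 * M.P.real A := by
  rw [measureReal_def, M.law n A hA i j k, setIntegral_congr_fun (M.F_le n A hA)
    (g := fun _ => killWeight s T k) fun ω hω => by simp [killWeight, selectionDenom, hAT ω hω],
    setIntegral_const, smul_eq_mul]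
  ring

lemma setIntegral_succ_of_Y_eq (hN : 0 < N) (hs : 0 ≤ s) {n : ℕ} {A : Set Ω}
    (hA : MeasurableSet[M.F n] A) {T : Finset (Fin N)} (hAT : ∀ ω ∈ A, M.Y n ω = T)
    (g : ℕ → ℝ) :
    ∫ ω in A, g (M.Y (n + 1) ω).card ∂M.P = nextMean N s g T.card * M.P.real A := by
  have hZ : Measurable fun ω => (M.mo n ω, M.fa n ω, M.ka n ω) :=
    (M.meas_mo n).prodMk ((M.meas_fa n).prodMk (M.meas_ka n))
  rw [setIntegral_eq_sum_fibers (fun p => hZ (measurableSet_singleton p)) (M.F_le n A hA)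
    (M.integrable_comp_Y (n + 1) (g ·.card)).integrableOn, ← sum_replace_killWeight hN hs T g,
    Finset.sum_mul]
  refine Finset.sum_congr rfl fun ⟨i, j, k⟩ _ => ?_
  have hfib : A ∩ (fun ω => (M.mo n ω, M.fa n ω, M.ka n ω)) ⁻¹' {(i, j, k)} =
      A ∩ {ω | M.mo n ω = i ∧ M.fa n ω = j ∧ M.ka n ω = k} := by
    ext; simp
  rw [setIntegral_congr_fun ((M.F_le n A hA).inter (hZ (measurableSet_singleton _)))
    (g := fun _ => g (replace T i k).card), setIntegral_const, smul_eq_mul, hfib,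
    M.measureReal_inter_parents_eq hA hAT]
  · ring
  · rintro ω ⟨hωA, hω⟩
    obtain ⟨rfl, -, rfl⟩ : M.mo n ω = i ∧ M.fa n ω = j ∧ M.ka n ω = k := by simpa using hω
    simp [M.Y_rec, replace, hAT ω hωA]

theorem setIntegral_succ (hN : 0 < N) (hs : 0 ≤ s) {n : ℕ} {B : Set Ω}
    (hB : MeasurableSet[M.F n] B) (g : ℕ → ℝ) :
    ∫ ω in B, g (M.Y (n + 1) ω).card ∂M.P =
      ∫ ω in B, nextMean N s g (M.Y n ω).card ∂M.P := by
  have hfib : ∀ T, MeasurableSet (M.Y n ⁻¹' {T}) := fun T => M.meas_Y n {T}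
  rw [setIntegral_eq_sum_fibers hfib (M.F_le n B hB)
      (M.integrable_comp_Y (n + 1) (g ·.card)).integrableOn,
    setIntegral_eq_sum_fibers hfib (M.F_le n B hB)
      (M.integrable_comp_Y n (nextMean N s g ·.card)).integrableOn]
  refine Finset.sum_congr rfl fun T _ => ?_
  have hBT : MeasurableSet[M.F n] (B ∩ M.Y n ⁻¹' {T}) :=
    hB.inter (M.measurableSet_F_preimage_Y le_rfl _)
  rw [M.setIntegral_succ_of_Y_eq hN hs hBT (fun ω hω => hω.2) g,
    setIntegral_congr_fun (M.F_le n _ hBT) (g := fun _ => nextMean N s g T.card)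
      fun ω hω => by rw [show M.Y n ω = T from hω.2],
    setIntegral_const, smul_eq_mul, mul_comm]

lemma card_Y_succ_le (n : ℕ) (ω : Ω) : (M.Y (n + 1) ω).card ≤ (M.Y n ω).card + 1 := by
  rw [M.Y_rec]
  split
  · exact Finset.card_insert_le _ _
  · exact Finset.card_erase_le.trans (Nat.le_succ _)

variable (l m : ℕ)

def staysIn (n : ℕ) : Set Ω := {ω | ∀ j < n, (M.Y j ω).card ∈ Set.Ioo l m}

def exitsBelow (n : ℕ) : Set Ω := {ω | ∃ j < n, (M.Y j ω).card ≤ l ∧ ω ∈ M.staysIn l m j}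

variable {l m}

lemma measurableSet_staysIn {k n : ℕ} (h : k ≤ n + 1) :
    MeasurableSet[M.F n] (M.staysIn l m k) := by
  have : M.staysIn l m k = ⋂ j ∈ Finset.range k, M.Y j ⁻¹' {T | T.card ∈ Set.Ioo l m} := by
    ext; simp [staysIn]
  rw [this]
  exact Finset.measurableSet_biInter _ fun j hj =>
    M.measurableSet_F_preimage_Y (by simp at hj; omega) _

lemma staysIn_zero : M.staysIn l m 0 = Set.univ := by simp [staysIn]

lemma staysIn_succ_subset (n : ℕ) : M.staysIn l m (n + 1) ⊆ M.staysIn l m n :=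
  fun _ hω j hj => hω j (hj.trans n.lt_succ_self)

lemma exitsBelow_zero : M.exitsBelow l m 0 = ∅ := by simp [exitsBelow]

lemma exitsBelow_succ_subset (n : ℕ) :
    M.exitsBelow l m (n + 1) ⊆
      M.exitsBelow l m n ∪ (M.staysIn l m n ∩ {ω | (M.Y n ω).card ≤ l}) := by
  rintro ω ⟨j, hj, hjl, hjs⟩
  rcases Nat.lt_succ_iff_lt_or_eq.1 hj with hj | rfl
  · exact Or.inl ⟨j, hj, hjl, hjs⟩
  · exact Or.inr ⟨hjs, hjl⟩

lemma subset_exitsBelow_union_staysIn (hm : ∀ ω, (M.Y 0 ω).card ≤ m) (n : ℕ) :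
    {ω | ∀ j ≤ n, (M.Y j ω).card ≠ m} ⊆ M.exitsBelow l m (n + 1) ∪ M.staysIn l m (n + 1) := by
  classical
  intro ω hω
  by_contra hcon
  simp only [Set.mem_union, not_or] at hcon
  have hex : ∃ j, j < n + 1 ∧ (M.Y j ω).card ∉ Set.Ioo l m := by simpa [staysIn] using hcon.2
  obtain ⟨j, ⟨hj, hjout⟩, hmin⟩ : ∃ j, (j < n + 1 ∧ (M.Y j ω).card ∉ Set.Ioo l m) ∧
      ∀ i < j, ¬ (i < n + 1 ∧ (M.Y i ω).card ∉ Set.Ioo l m) :=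
    ⟨Nat.find hex, Nat.find_spec hex, fun i hi => Nat.find_min hex hi⟩
  have hbefore : ω ∈ M.staysIn l m j := fun i hi =>
    not_not.1 fun h => hmin i hi ⟨hi.trans hj, h⟩
  -- the count moves up by at most one, so on first leaving the window it cannot jump over `m`
  have hjm : (M.Y j ω).card ≤ m := by
    rcases j with _ | i
    · exact hm ω
    · have := M.card_Y_succ_le i ω
      have := (hbefore i i.lt_succ_self).2
      omega
  have hjl : ¬ (M.Y j ω).card ≤ l := fun h => hcon.1 ⟨j, hj, h, hbefore⟩
  exact hω j (by omega) (by simp only [Set.mem_Ioo] at hjout; omega)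

lemma setIntegral_staysIn_succ_le (hN : 0 < N) (hs : 0 ≤ s) {g : ℕ → ℝ} {ρ : ℝ}
    (hg : ∀ t ∈ Set.Ioo l m, nextMean N s g t ≤ ρ * g t) (n : ℕ) :
    ∫ ω in M.staysIn l m (n + 1), g (M.Y (n + 1) ω).card ∂M.P ≤
      ρ * ∫ ω in M.staysIn l m (n + 1), g (M.Y n ω).card ∂M.P := by
  rw [M.setIntegral_succ hN hs (M.measurableSet_staysIn le_rfl), ← integral_const_mul]
  exact setIntegral_mono_on (M.integrable_comp_Y n (nextMean N s g ·.card)).integrableOn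
    (M.integrable_comp_Y n (ρ * g ·.card)).integrableOn
    (M.F_le n _ (M.measurableSet_staysIn le_rfl)) fun ω hω => hg _ (hω n n.lt_succ_self)

lemma setIntegral_staysIn_le (hN : 0 < N) (hs : 0 ≤ s) {x₀ : ℕ}
    (hY₀ : ∀ ω, (M.Y 0 ω).card = x₀) {g : ℕ → ℝ} (hg₀ : ∀ t, 0 ≤ g t) {ρ : ℝ} (hρ : 0 ≤ ρ)
    (hg : ∀ t ∈ Set.Ioo l m, nextMean N s g t ≤ ρ * g t) (n : ℕ) :
    ∫ ω in M.staysIn l m n, g (M.Y n ω).card ∂M.P ≤ ρ ^ n * g x₀ := by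
  induction n with
  | zero => simp [staysIn_zero, hY₀]
  | succ n ih =>
    calc ∫ ω in M.staysIn l m (n + 1), g (M.Y (n + 1) ω).card ∂M.P
        ≤ ρ * ∫ ω in M.staysIn l m (n + 1), g (M.Y n ω).card ∂M.P :=
          M.setIntegral_staysIn_succ_le hN hs hg n
      _ ≤ ρ * ∫ ω in M.staysIn l m n, g (M.Y n ω).card ∂M.P :=
          mul_le_mul_of_nonneg_left (setIntegral_mono_set
            (M.integrable_comp_Y n (g ·.card)).integrableOn (ae_of_all _ fun _ => hg₀ _)
            (M.staysIn_succ_subset n).eventuallyLE) hρ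
      _ ≤ ρ ^ (n + 1) * g x₀ := by rw [pow_succ', mul_assoc]; gcongr

lemma mul_measureReal_exitsBelow_add_setIntegral_le (hN : 0 < N) (hs : 0 ≤ s) {x₀ : ℕ}
    (hY₀ : ∀ ω, (M.Y 0 ω).card = x₀) {g : ℕ → ℝ} (hg₀ : ∀ t, 0 ≤ g t) {c : ℝ} (hc : 0 ≤ c)
    (hgc : ∀ t ≤ l, c ≤ g t) (hg : ∀ t ∈ Set.Ioo l m, nextMean N s g t ≤ g t) (n : ℕ) :
    c * M.P.real (M.exitsBelow l m n) + ∫ ω in M.staysIn l m n, g (M.Y n ω).card ∂M.P ≤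
      g x₀ := by
  induction n with
  | zero => simp [exitsBelow_zero, staysIn_zero, hY₀]
  | succ n ih =>
    set E := M.staysIn l m n ∩ {ω | (M.Y n ω).card ≤ l}
    have hE : MeasurableSet E :=
      (M.F_le n _ (M.measurableSet_staysIn n.le_succ)).inter (M.meas_Y n {T | T.card ≤ l})
    have hint : ∀ A, IntegrableOn (fun ω => g (M.Y n ω).card) A M.P :=
      fun _ => (M.integrable_comp_Y n (g ·.card)).integrableOn
    have hexit : c * M.P.real (M.exitsBelow l m (n + 1)) ≤
        c * M.P.real (M.exitsBelow l m n) + ∫ ω in E, g (M.Y n ω).card ∂M.P := by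
      calc c * M.P.real (M.exitsBelow l m (n + 1))
          ≤ c * (M.P.real (M.exitsBelow l m n) + M.P.real E) := by
            gcongr
            exact (measureReal_mono (M.exitsBelow_succ_subset n)).trans
              (measureReal_union_le _ _)
        _ ≤ _ := by
            rw [mul_add]
            gcongr
            exact setIntegral_ge_of_const_le_real hE (measure_ne_top _ _)
              (fun ω hω => hgc _ hω.2) (hint E)
    have hstep : ∫ ω in M.staysIn l m (n + 1), g (M.Y (n + 1) ω).card ∂M.P ≤
        ∫ ω in M.staysIn l m (n + 1), g (M.Y n ω).card ∂M.P := by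
      simpa using M.setIntegral_staysIn_succ_le hN hs (ρ := 1) (by simpa using hg) n
    have hsplit : ∫ ω in M.staysIn l m (n + 1), g (M.Y n ω).card ∂M.P +
        ∫ ω in E, g (M.Y n ω).card ∂M.P ≤ ∫ ω in M.staysIn l m n, g (M.Y n ω).card ∂M.P := by
      have hdisj : Disjoint (M.staysIn l m (n + 1)) E :=
        Set.disjoint_left.2 fun ω h₁ h₂ => (h₁ n n.lt_succ_self).1.not_ge h₂.2
      rw [← setIntegral_union hdisj hE (hint _) (hint _)]
      exact setIntegral_mono_set (hint _) (ae_of_all _ fun _ => hg₀ _)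
        (Set.union_subset (M.staysIn_succ_subset n) Set.inter_subset_left).eventuallyLE
    linarith

theorem measureReal_forall_card_ne_le (hN : 0 < N) (hs : 0 ≤ s) {x₀ : ℕ}
    (hY₀ : ∀ ω, (M.Y 0 ω).card = x₀) (hl : l ≤ x₀) (hm : x₀ ≤ m) {r ρ : ℝ} (hr₀ : 0 < r) (hr₁ : r ≤ 1) (hρ : 0 ≤ ρ)
    (hdrift : ∀ t ∈ Set.Ioo l m, nextMean N s (r ^ ·) t ≤ ρ * r ^ t) (n : ℕ) :
    M.P.real {ω | ∀ j ≤ n, (M.Y j ω).card ≠ m} ≤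
      (1 + s)⁻¹ ^ (x₀ - l) + r⁻¹ ^ (m - x₀) * ρ ^ n := by
  have hlam₀ : 0 < (1 + s)⁻¹ := by positivity
  have hlam₁ : (1 + s)⁻¹ ≤ 1 := inv_le_one_of_one_le₀ (by linarith)
  have hS : MeasurableSet (M.staysIn l m (n + 1)) := M.F_le n _ (M.measurableSet_staysIn le_rfl)
  have hexit : M.P.real (M.exitsBelow l m (n + 1)) ≤ (1 + s)⁻¹ ^ (x₀ - l) := by
    have h := M.mul_measureReal_exitsBelow_add_setIntegral_le (l := l) (m := m) hN hs hY₀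
      (g := ((1 + s)⁻¹ ^ ·)) (fun t => by positivity) (by positivity)
      (fun t ht => pow_le_pow_of_le_one hlam₀.le hlam₁ ht)
      (fun t _ => (nextMean_inv_pow (by linarith) t).le) (n + 1)
    have h₀ : 0 ≤ ∫ ω in M.staysIn l m (n + 1), (1 + s)⁻¹ ^ (M.Y (n + 1) ω).card ∂M.P :=
      setIntegral_nonneg hS fun _ _ => by positivity
    rw [← pow_sub_mul_pow _ hl] at h
    exact le_of_mul_le_mul_left (by linarith) (by positivity : 0 < (1 + s)⁻¹ ^ l)
  have hstay : M.P.real (M.staysIn l m (n + 1)) ≤ r⁻¹ ^ (m - x₀) * ρ ^ n := by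
    have h₁ : r ^ m * M.P.real (M.staysIn l m (n + 1)) ≤
        ∫ ω in M.staysIn l m (n + 1), r ^ (M.Y n ω).card ∂M.P :=
      setIntegral_ge_of_const_le_real hS (measure_ne_top _ _)
        (fun ω hω => pow_le_pow_of_le_one hr₀.le hr₁ (hω n n.lt_succ_self).2.le)
        (M.integrable_comp_Y n (r ^ ·.card)).integrableOn
    have h₂ : ∫ ω in M.staysIn l m (n + 1), r ^ (M.Y n ω).card ∂M.P ≤
        ∫ ω in M.staysIn l m n, r ^ (M.Y n ω).card ∂M.P :=
      setIntegral_mono_set (M.integrable_comp_Y n (r ^ ·.card)).integrableOn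
        (ae_of_all _ fun _ => by positivity) (M.staysIn_succ_subset n).eventuallyLE
    have h₃ := M.setIntegral_staysIn_le hN hs hY₀ (fun t => by positivity) hρ hdrift n
    rw [← pow_sub_mul_pow r hm] at h₁
    rw [inv_pow, inv_mul_eq_div, le_div_iff₀ (by positivity)]
    refine le_of_mul_le_mul_right ?_ (by positivity : 0 < r ^ x₀)
    linarith
  calc M.P.real {ω | ∀ j ≤ n, (M.Y j ω).card ≠ m}
      ≤ M.P.real (M.exitsBelow l m (n + 1) ∪ M.staysIn l m (n + 1)) :=
        measureReal_mono (M.subset_exitsBelow_union_staysIn (fun ω => (hY₀ ω).trans_le hm) n)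
    _ ≤ _ := (measureReal_union_le _ _).trans (add_le_add hexit hstay)

theorem measureReal_forall_card_ne_floor_le (hN : 0 < N) (hs : 0 ≤ s) {a b : ℝ} (hab : a ≤ b)
    (hb : b < 1) (hY₀ : ∀ ω, (M.Y 0 ω).card = ⌊a * N⌋₊) {r : ℝ} (hr : (1 + s)⁻¹ ≤ r)
    (hr₁ : r ≤ 1) (C : ℕ) :
    M.P.real {ω | ∀ n : ℕ, (n : ℝ) ≤ C * N → (M.Y n ω).card ≠ ⌊b * N⌋₊} ≤
      (1 + s)⁻¹ ^ (⌊a * N⌋₊ / 2) + (r⁻¹ * (contractionRate a b s r) ^ C) ^ N := by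
  have hr₀ : 0 < r := (by positivity : (0 : ℝ) < (1 + s)⁻¹).trans_le hr
  have hρ := contractionRate_nonneg hs hab hb hr hr₁
  have hx₀m : ⌊a * N⌋₊ ≤ ⌊b * N⌋₊ := Nat.floor_le_floor (by gcongr)
  have hmN : ⌊b * N⌋₊ ≤ N := by
    refine ((Nat.floor_lt' hN.ne').2 ?_).le
    have : (0 : ℝ) < N := by exact_mod_cast hN
    nlinarith
  have hdrift : ∀ t ∈ Set.Ioo (⌊a * N⌋₊ / 2) ⌊b * N⌋₊,
      nextMean N s (r ^ ·) t ≤ (contractionRate a b s r) * r ^ t := fun t ht => by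
    rw [nextMean_pow (by linarith) hr₀.ne', contractionRate]
    gcongr
    exacts [(geomDrift_mem_Icc hs hr hr₁).1, le_upProb_of_mem_Ioo hN hs hb.le ht]
  have hevent : {ω | ∀ n : ℕ, (n : ℝ) ≤ C * N → (M.Y n ω).card ≠ ⌊b * N⌋₊} =
      {ω | ∀ n ≤ C * N, (M.Y n ω).card ≠ ⌊b * N⌋₊} := by
    ext; simp only [Set.mem_ofPred_eq]; norm_cast
  rw [hevent]
  refine (M.measureReal_forall_card_ne_le hN hs hY₀ (Nat.div_le_self _ 2) hx₀m hr₀ hr₁ hρ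
    hdrift (C * N)).trans (add_le_add ?_ ?_)
  · exact pow_le_pow_of_le_one (by positivity) (inv_le_one_of_one_le₀ (by linarith)) (by omega)
  · rw [mul_pow, ← pow_mul, mul_comm C N]
    gcongr
    exacts [one_le_inv₀ hr₀ |>.2 hr₁, by omega]

end MoranModel

theorem moran_hitting_time_linear_bound
    (s a b : ℝ) (hs : 0 < s) (ha : 0 < a) (hab : a ≤ b) (hb : b < 1)
    (Ω : ℕ → Type) [∀ N, MeasurableSpace (Ω N)]
    (M : ∀ N : ℕ, MoranModel (N + 2) s (Ω N))
    (hY0 : ∀ N ω, ((M N).Y 0 ω).card = ⌊a * ((N : ℝ) + 2)⌋₊) :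
    ∃ C : ℝ, 0 < C ∧
      Tendsto (fun N : ℕ =>
          (M N).P {ω | ∀ n : ℕ, (n : ℝ) ≤ C * ((N : ℝ) + 2) →
            ((M N).Y n ω).card ≠ ⌊b * ((N : ℝ) + 2)⌋₊})
        atTop (nhds 0) := by
  have hlam₀ : 0 < (1 + s)⁻¹ := by positivity
  have hlam₁ : (1 + s)⁻¹ < 1 := inv_lt_one_of_one_lt₀ (by linarith)
  obtain ⟨r, hr, hr₁⟩ := exists_between hlam₁
  have hr₀ : 0 < r := hlam₀.trans hr
  have hρ₀ := contractionRate_nonneg hs.le hab hb hr.le hr₁.le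
  obtain ⟨C, hC⟩ := exists_pow_lt_of_lt_one hr₀ (contractionRate_lt_one hs.le ha hb hr hr₁)
  have hC₀ : C ≠ 0 := by rintro rfl; rw [pow_zero] at hC; linarith
  have hγ : r⁻¹ * contractionRate a b s r ^ C < 1 := by rwa [inv_mul_lt_iff₀ hr₀, mul_one]
  have hx : Tendsto (fun N : ℕ => ⌊a * ((N : ℝ) + 2)⌋₊ / 2) atTop atTop :=
    (Nat.tendsto_div_const_atTop two_ne_zero).comp <| tendsto_nat_floor_atTop.comp <|
      (tendsto_natCast_atTop_atTop.atTop_add tendsto_const_nhds).const_mul_atTop ha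
  have hbound := ((tendsto_pow_atTop_nhds_zero_of_lt_one hlam₀.le hlam₁).comp hx).add
    ((tendsto_pow_atTop_nhds_zero_of_lt_one (by positivity) hγ).comp (tendsto_add_atTop_nat 2))
  rw [add_zero] at hbound
  refine ⟨C, by positivity, (ENNReal.tendsto_toReal_iff (fun N => measure_ne_top _ _)
    ENNReal.zero_ne_top).1 (squeeze_zero (fun N => ENNReal.toReal_nonneg) (fun N => ?_) hbound)⟩
  simpa [measureReal_def] using (M N).measureReal_forall_card_ne_floor_le (by omega) hs.le hab hb
    (by simpa using hY0 N) hr.le hr₁.le C
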